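/- Let A be a small preadditive category. Then the center Z(A) of A is isomorphic as a ring to the center Z(Mod A) of its module category. Explicitly, the map sending a natural transformation α : id_A → id_A to the natural transformation of id_{Mod A} whose component at a module M is given pointwise by M(α_a) : M(a) → M(a), is a ring isomorphism Z(A) → Z(Mod A). -/

import Mathlib

/-!
The inverse reads off an element `β` of the center of `Mod A` on the representable modules:
`α_a := β_{A(-,a)}(𝟙_a)`. By the additive Yoneda lemma every `m ∈ M(a)` is the image of `𝟙_a`
under a morphism `A(-,a) ⟶ M`, so naturality of `β` forces `β_M` to act on `m` as `M(α_a)`;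
this gives both inverse laws.
-/

open CategoryTheory CategoryTheory.Limits Opposite
noncomputable section
set_option synthInstance.maxHeartbeats 1000000
set_option maxHeartbeats 1000000
universe u
variable (A : Type u) [SmallCategory A] [Preadditive A]

abbrev PMod := Aᵒᵖ ⥤ AddCommGrpCat.{u}

/-- The category of right `A`-modules: additive functors `Aᵒᵖ ⥤ Ab`. -/
abbrev ModCat := ObjectProperty.FullSubcategory (fun M : PMod A => M.Additive)

/-- The natural endomorphism of a module `M` induced by a natural transformation
`α : 𝟭 A ⟶ 𝟭 A`, given pointwise by `M (α_a)`. -/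
def centerMapApp (α : End (𝟭 A)) (M : ModCat A) : M ⟶ M where
  hom :=
  { app x := M.1.map (α.app x.unop).op
    naturality x y f := by
      dsimp
      rw [← M.1.map_comp, ← M.1.map_comp]
      congr 1
      have h := α.naturality f.unop
      dsimp at h
      rw [← f.op_unop, ← op_comp, ← op_comp, h] }

/-- The natural transformation of `𝟭 (ModCat A)` associated with `α : 𝟭 A ⟶ 𝟭 A`. -/
def centerToModCenter (α : End (𝟭 A)) : End (𝟭 (ModCat A)) where
  app M := centerMapApp A α M
  naturality M N φ := by
    apply ObjectProperty.hom_ext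
    apply NatTrans.ext
    funext x
    exact (φ.hom.naturality (α.app x.unop).op).symm

section

variable {A}

instance (M : ModCat A) : M.obj.Additive := M.property

@[simp]
lemma centerToModCenter_app_apply (α : End (𝟭 A)) (M : ModCat A) (x : Aᵒᵖ)
    (m : M.1.obj x) :
    ((centerToModCenter A α).app M).hom.app x m = M.1.map (α.app x.unop).op m :=
  rfl

lemma modCenter_ext {β γ : End (𝟭 (ModCat A))}
    (h : ∀ (M : ModCat A) (x : Aᵒᵖ) (m : M.1.obj x),
      (β.app M).hom.app x m = (γ.app M).hom.app x m) :
    β = γ :=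
  NatTrans.ext <| funext fun M => ObjectProperty.hom_ext _ <|
    NatTrans.ext <| funext fun x => AddCommGrpCat.ext (h M x)

lemma centerToModCenter_add (α β : End (𝟭 A)) :
    centerToModCenter A (α + β) = centerToModCenter A α + centerToModCenter A β :=
  modCenter_ext fun M x m => by
    simp only [centerToModCenter_app_apply, CatCenter.app_add, op_add, Functor.map_add]
    rfl

-- `M` is contravariant, so it reverses products; commutativity of the center undoes this.
lemma centerToModCenter_mul (α β : End (𝟭 A)) :
    centerToModCenter A (α * β) = centerToModCenter A α * centerToModCenter A β :=
  modCenter_ext fun M x m => by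
    change M.1.map ((α * β).app x.unop).op m =
      M.1.map (α.app x.unop).op (M.1.map (β.app x.unop).op m)
    rw [show (α * β).app x.unop = α.app x.unop ≫ β.app x.unop from CatCenter.mul_app α β _,
      op_comp, M.1.map_comp]
    rfl

variable (A) in
def representableModule (a : A) : ModCat A := ⟨preadditiveYoneda.obj a, inferInstance⟩

/-- The morphism `A(-, a) ⟶ M` corresponding to `m ∈ M(a)` under the Yoneda lemma. -/
def representableHom (M : ModCat A) (a : A) (m : M.1.obj (op a)) :
    representableModule A a ⟶ M where
  hom :=
  { app x := AddCommGrpCat.ofHom <| AddMonoidHom.mk' (fun f => M.1.map f.op m) fun f g => by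
      change M.1.map (f.op + g.op) m = _
      rw [Functor.map_add]
      rfl
    naturality x y g := by
      refine AddCommGrpCat.ext fun (f : x.unop ⟶ a) => ?_
      change M.1.map (g.unop ≫ f).op m = M.1.map g (M.1.map f.op m)
      rw [show (g.unop ≫ f).op = f.op ≫ g from rfl, M.1.map_comp]
      rfl }

lemma representableHom_app_id (M : ModCat A) (a : A) (m : M.1.obj (op a)) :
    (representableHom M a m).hom.app (op a) (𝟙 a) = m := by
  change M.1.map (𝟙 a).op m = m
  simp

lemma modCenter_app_apply (β : End (𝟭 (ModCat A))) (M : ModCat A) (a : A)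
    (m : M.1.obj (op a)) :
    (β.app M).hom.app (op a) m =
      M.1.map ((β.app (representableModule A a)).hom.app (op a) (𝟙 a)).op m := by
  have h : (β.app M).hom.app (op a) ((representableHom M a m).hom.app (op a) (𝟙 a)) =
      (representableHom M a m).hom.app (op a)
        ((β.app (representableModule A a)).hom.app (op a) (𝟙 a)) :=
    congrArg (fun φ : representableModule A a ⟶ M => φ.hom.app (op a) (𝟙 a))
      (β.naturality (representableHom M a m))
  rwa [representableHom_app_id] at h

variable (A) in
def modCenterToCenter (β : End (𝟭 (ModCat A))) : End (𝟭 A) where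
  app a := (β.app (representableModule A a)).hom.app (op a) (𝟙 a)
  naturality a b f := by
    have hβ : (β.app (representableModule A b)).hom.app (op a) (f ≫ 𝟙 b) =
        f ≫ (β.app (representableModule A b)).hom.app (op b) (𝟙 b) :=
      congrArg (fun φ => φ (𝟙 b)) ((β.app (representableModule A b)).hom.naturality f.op)
    rw [Category.comp_id] at hβ
    exact hβ.symm.trans (modCenter_app_apply β (representableModule A b) a f)

lemma modCenterToCenter_centerToModCenter (α : End (𝟭 A)) :
    modCenterToCenter A (centerToModCenter A α) = α :=
  CatCenter.ext _ _ fun a => Category.comp_id (α.app a)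

lemma centerToModCenter_modCenterToCenter (β : End (𝟭 (ModCat A))) :
    centerToModCenter A (modCenterToCenter A β) = β :=
  modCenter_ext fun M x m => (modCenter_app_apply β M x.unop m).symm

variable (A) in
def centerRingEquivModCenter : End (𝟭 A) ≃+* End (𝟭 (ModCat A)) where
  toFun := centerToModCenter A
  invFun := modCenterToCenter A
  left_inv := modCenterToCenter_centerToModCenter
  right_inv := centerToModCenter_modCenterToCenter
  map_mul' := centerToModCenter_mul
  map_add' := centerToModCenter_add

end

theorem statement15 :
    ∃ e : End (𝟭 A) ≃+* End (𝟭 (ModCat A)),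
      ∀ α : End (𝟭 A), e α = centerToModCenter A α :=
  ⟨centerRingEquivModCenter A, fun _ => rfl⟩
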